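/- arXiv:1912.03646 — 3 statements merged into one kernel-verified Lean document; each statement's English description precedes it below -/
import Mathlib

section
/- Let ρ and σ be density matrices on Fin n and let ε ∈ [0,1] satisfy √ε < √F(ρ,σ). Then D_h^ε(ρ‖σ) ≤ −2 log₂ (√F(ρ,σ) − √ε). Equivalently, every test Λ with Re Tr[Λ·ρ] ≥ 1 − ε satisfies Re Tr[Λ·σ] ≥ (√F(ρ,σ) − √ε)². -/
/-!
Write `M = √ρ √σ`, so that `√F(ρ,σ) = Tr √(Mᴴ M)`. Polar decomposition gives a contraction `W`
with `W M = √(Mᴴ M)`. Splitting `1 = Λ + (1 - Λ)` inside `Tr (W √ρ √σ)` and applying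
Cauchy–Schwarz to the inner product `⟪X, Y⟫ = Tr (Y Θ Xᴴ)` for `Θ = Λ` and `Θ = 1 - Λ` bounds
`√F` by the Bhattacharyya coefficient `√(pq) + √((1-p)(1-q))` of the outcome distributions of the
test, where `p = Tr Λρ ≥ 1 - ε` and `q = Tr Λσ`; hence `√F ≤ √q + √ε`.
-/

open Matrix Kronecker
open scoped ComplexOrder

open scoped Classical in
noncomputable def matSqrt {n : Type*} [Fintype n] [DecidableEq n] (A : Matrix n n ℂ) :
    Matrix n n ℂ :=
  if h : A.PosSemidef then
    (h.1.eigenvectorUnitary : Matrix n n ℂ) *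
      Matrix.diagonal (fun i => ((Real.sqrt (h.1.eigenvalues i) : ℝ) : ℂ)) *
      (star h.1.eigenvectorUnitary : Matrix n n ℂ)
  else 0

noncomputable def rootFidelity {n : Type*} [Fintype n] [DecidableEq n]
    (ρ σ : Matrix n n ℂ) : ℝ :=
  (matSqrt (matSqrt σ * ρ * matSqrt σ)).trace.re

noncomputable def fidelity {n : Type*} [Fintype n] [DecidableEq n]
    (ρ σ : Matrix n n ℂ) : ℝ :=
  (rootFidelity ρ σ) ^ 2

noncomputable def traceNorm {n : Type*} [Fintype n] [DecidableEq n] (A : Matrix n n ℂ) : ℝ :=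
  (matSqrt (Aᴴ * A)).trace.re

/-- The set of attainable type-II error values in hypothesis testing. -/
def testValues {n : Type*} [Fintype n] [DecidableEq n] (ρ σ : Matrix n n ℂ) (ε : ℝ) :
    Set ℝ :=
  { x | ∃ Λ : Matrix n n ℂ, Λ.PosSemidef ∧ (1 - Λ).PosSemidef ∧
      1 - ε ≤ (Λ * ρ).trace.re ∧ x = (Λ * σ).trace.re }

/-- ε-hypothesis-testing relative entropy. -/
noncomputable def Dh {n : Type*} [Fintype n] [DecidableEq n]
    (ρ σ : Matrix n n ℂ) (ε : ℝ) : ℝ :=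
  - Real.logb 2 (sInf (testValues ρ σ ε))

/-- GHZ unit vector. -/
noncomputable def ghz (M K : ℕ) : (Fin M → Fin K) → ℂ :=
  fun f => if ∃ c, ∀ m, f m = c then ((Real.sqrt K : ℂ))⁻¹ else 0

/-- GHZ rank-one projection. -/
noncomputable def ghzProj (M K : ℕ) : Matrix (Fin M → Fin K) (Fin M → Fin K) ℂ :=
  Matrix.vecMulVec (ghz M K) (star ∘ ghz M K)

/-- The twisting unitary. -/
def twist (M K d : ℕ)
    (U : (Fin M → Fin K) → Matrix (Fin M → Fin d) (Fin M → Fin d) ℂ) :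
    Matrix ((Fin M → Fin K) × (Fin M → Fin d)) ((Fin M → Fin K) × (Fin M → Fin d)) ℂ :=
  Matrix.of fun p q => if p.1 = q.1 then U p.1 p.2 q.2 else 0

/-- The privacy test `Π = W (Φ ⊗ 1) Wᴴ`. -/
noncomputable def privacyTest (M K d : ℕ)
    (U : (Fin M → Fin K) → Matrix (Fin M → Fin d) (Fin M → Fin d) ℂ) :
    Matrix ((Fin M → Fin K) × (Fin M → Fin d)) ((Fin M → Fin K) × (Fin M → Fin d)) ℂ :=
  twist M K d U * (ghzProj M K ⊗ₖ (1 : Matrix (Fin M → Fin d) (Fin M → Fin d) ℂ)) *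
    (twist M K d U)ᴴ

/-- The private state `γ = W (Φ ⊗ ω) Wᴴ`. -/
noncomputable def privateState (M K d : ℕ)
    (U : (Fin M → Fin K) → Matrix (Fin M → Fin d) (Fin M → Fin d) ℂ)
    (ω : Matrix (Fin M → Fin d) (Fin M → Fin d) ℂ) :
    Matrix ((Fin M → Fin K) × (Fin M → Fin d)) ((Fin M → Fin K) × (Fin M → Fin d)) ℂ :=
  twist M K d U * (ghzProj M K ⊗ₖ ω) * (twist M K d U)ᴴ

/-- A vector on `𝒦 × 𝒮` is product across the bipartition `J | Jᶜ` of the parties. -/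
def IsProductAcross {M K d : ℕ} (J : Set (Fin M))
    (v : (Fin M → Fin K) × (Fin M → Fin d) → ℂ) : Prop :=
  ∃ (v₁ : ((↥J) → Fin K) × ((↥J) → Fin d) → ℂ)
    (v₂ : ((↥(Jᶜ)) → Fin K) × ((↥(Jᶜ)) → Fin d) → ℂ),
    ∀ (f : Fin M → Fin K) (x : Fin M → Fin d),
      v (f, x) = v₁ (fun m => f m.1, fun m => x m.1) * v₂ (fun m => f m.1, fun m => x m.1)

/-- Biseparability: a finite convex combination of pure states, each product across
some nontrivial bipartition of the parties. -/
def Biseparable {M K d : ℕ}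
    (σ : Matrix ((Fin M → Fin K) × (Fin M → Fin d))
      ((Fin M → Fin K) × (Fin M → Fin d)) ℂ) : Prop :=
  ∃ (N : ℕ) (p : Fin N → ℝ) (w : Fin N → ((Fin M → Fin K) × (Fin M → Fin d)) → ℂ)
    (J : Fin N → Set (Fin M)),
    (∀ t, 0 ≤ p t) ∧ (∑ t, p t = 1) ∧
    (∀ t, ∑ i, ‖w t i‖ ^ 2 = 1) ∧
    (∀ t, J t ≠ ∅ ∧ J t ≠ Set.univ ∧ IsProductAcross (J t) (w t)) ∧
    σ = ∑ t, (p t : ℂ) • Matrix.vecMulVec (w t) (star ∘ w t)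

/-- Partial trace over the second tensor factor. -/
noncomputable def partialTrace₂ {A B : Type*} [Fintype B] (τ : Matrix (A × B) (A × B) ℂ) :
    Matrix A A ℂ :=
  Matrix.of fun a a' => ∑ b, τ (a, b) (a', b)

/-- Matrix logarithm of a Hermitian matrix via the spectral functional calculus. -/
noncomputable def matLog {n : Type*} [Fintype n] [DecidableEq n] (A : Matrix n n ℂ) :
    Matrix n n ℂ :=
  if hA : A.IsHermitian then
    (hA.eigenvectorUnitary : Matrix n n ℂ) *
      Matrix.diagonal (fun i => (Real.log (hA.eigenvalues i) : ℂ)) *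
      (star hA.eigenvectorUnitary : Matrix n n ℂ)
  else 0

open scoped MatrixOrder

namespace Matrix

variable {n 𝕜 : Type*} [Fintype n] [RCLike 𝕜]

lemma trace_mono {A B : Matrix n n 𝕜} (h : A ≤ B) : A.trace ≤ B.trace :=
  OrderHomClass.mono (tracePositiveLinearMap n ℝ 𝕜) h

lemma norm_trace_mul_mul_conjTranspose_le {Θ : Matrix n n 𝕜} (hΘ : Θ.PosSemidef)
    (X Y : Matrix n n 𝕜) :
    ‖(Y * Θ * Xᴴ).trace‖ ≤
      √(RCLike.re (X * Θ * Xᴴ).trace) * √(RCLike.re (Y * Θ * Yᴴ).trace) :=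
  let := Θ.toMatrixSeminormedAddCommGroup hΘ
  let := Θ.toMatrixInnerProductSpace hΘ
  norm_inner_le_norm (𝕜 := 𝕜) X Y

variable [DecidableEq n]

lemma cfc_mul_cfc (f g : ℝ → ℝ) (A : Matrix n n 𝕜) :
    cfc f A * cfc g A = cfc (fun x => f x * g x) A :=
  (cfc_mul f g A (A.finite_real_spectrum.continuousOn f)
    (A.finite_real_spectrum.continuousOn g)).symm

lemma cfc_mul_self {A : Matrix n n 𝕜} (hA : IsSelfAdjoint A) (f : ℝ → ℝ) :
    cfc f A * A = cfc (fun x => f x * x) A := by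
  conv_lhs => arg 2; rw [← cfc_id' ℝ A]
  exact cfc_mul_cfc f _ A

lemma PosSemidef.sqrt_eq_cfc_sqrt {A : Matrix n n 𝕜} (hA : A.PosSemidef) :
    CFC.sqrt A = cfc Real.sqrt A := by
  rw [CFC.sqrt_eq_real_sqrt A hA.nonneg, cfcₙ_eq_cfc (hf0 := Real.sqrt_zero)]

-- `W` is the polar part `(Mᴴ M)^(-1/2) Mᴴ`; with the junk value `(√0)⁻¹ = 0` it vanishes off the
-- support of `Mᴴ M`, and every identity needed below holds pointwise on all of `ℝ`.
lemma exists_contraction_mul_eq_sqrt (M : Matrix n n 𝕜) :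
    ∃ W : Matrix n n 𝕜, Wᴴ * W ≤ 1 ∧ W * M = CFC.sqrt (Mᴴ * M) := by
  have hT := posSemidef_conjTranspose_mul_self M
  set C := cfc (fun x : ℝ => (√x)⁻¹) (Mᴴ * M)
  have hC : Cᴴ = C := (cfc_predicate _ (Mᴴ * M) : IsSelfAdjoint C)
  have hCTC : C * C * (Mᴴ * M) * (C * C) = C * C := by
    rw [cfc_mul_cfc, cfc_mul_self hT.1, cfc_mul_cfc]
    congr 1
    funext x
    by_cases hx : √x = 0
    · simp [hx]
    · field_simp
      exact (Real.sq_sqrt (Real.sqrt_ne_zero'.mp hx).le).symm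
  refine ⟨C * Mᴴ, IsStarProjection.le_one ⟨?_, (posSemidef_conjTranspose_mul_self _).1⟩, ?_⟩
  · rw [IsIdempotentElem, conjTranspose_mul, conjTranspose_conjTranspose, hC]
    calc M * C * (C * Mᴴ) * (M * C * (C * Mᴴ)) = M * (C * C * (Mᴴ * M) * (C * C)) * Mᴴ := by
          simp only [mul_assoc]
      _ = M * C * (C * Mᴴ) := by rw [hCTC]; simp only [mul_assoc]
  · rw [mul_assoc, hT.sqrt_eq_cfc_sqrt, cfc_mul_self hT.1]
    simp only [inv_mul_eq_div, Real.div_sqrt]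

lemma trace_mul_mul_conjTranspose_le {X W : Matrix n n 𝕜} (hX : X.PosSemidef)
    (hW : Wᴴ * W ≤ 1) : (W * X * Wᴴ).trace ≤ X.trace := by
  set S := CFC.sqrt X
  have hS : star S = S := (CFC.sqrt_nonneg X).posSemidef.1
  have hSS : S * S = X := CFC.sqrt_mul_sqrt_self X hX.nonneg
  calc (W * X * Wᴴ).trace = (star S * (Wᴴ * W) * S).trace := by
        rw [hS, ← hSS, trace_mul_cycle, ← mul_assoc, trace_mul_comm, ← mul_assoc]
    _ ≤ (star S * 1 * S).trace := trace_mono (star_left_conjugate_le_conjugate hW S)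
    _ = X.trace := by rw [hS, mul_one, hSS]

lemma PosSemidef.trace_sqrt_mul_mul_sqrt {A : Matrix n n 𝕜} (hA : A.PosSemidef)
    (B : Matrix n n 𝕜) : (CFC.sqrt A * B * CFC.sqrt A).trace = (B * A).trace := by
  rw [trace_mul_cycle, CFC.sqrt_mul_sqrt_self A hA.nonneg, trace_mul_comm]

lemma PosSemidef.trace_mul_nonneg {A B : Matrix n n 𝕜} (hA : A.PosSemidef) (hB : B.PosSemidef) :
    0 ≤ (A * B).trace := by
  rw [← hB.trace_sqrt_mul_mul_sqrt]
  have hS : (CFC.sqrt B)ᴴ = CFC.sqrt B := (CFC.sqrt_nonneg B).posSemidef.1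
  simpa [hS] using (hA.conjTranspose_mul_mul_same (CFC.sqrt B)).trace_nonneg

lemma norm_trace_mul_sqrt_mul_mul_sqrt_le {ρ σ Θ W : Matrix n n 𝕜} (hρ : ρ.PosSemidef)
    (hσ : σ.PosSemidef) (hΘ : Θ.PosSemidef) (hW : Wᴴ * W ≤ 1) :
    ‖(W * CFC.sqrt ρ * Θ * CFC.sqrt σ).trace‖ ≤
      √(RCLike.re (Θ * ρ).trace) * √(RCLike.re (Θ * σ).trace) := by
  have hS (A : Matrix n n 𝕜) : (CFC.sqrt A)ᴴ = CFC.sqrt A := (CFC.sqrt_nonneg A).posSemidef.1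
  have hρside : RCLike.re (W * CFC.sqrt ρ * Θ * (W * CFC.sqrt ρ)ᴴ).trace ≤
      RCLike.re (Θ * ρ).trace := by
    have hX : (CFC.sqrt ρ * Θ * CFC.sqrt ρ).PosSemidef := by
      simpa [hS] using hΘ.conjTranspose_mul_mul_same (CFC.sqrt ρ)
    rw [← hρ.trace_sqrt_mul_mul_sqrt, conjTranspose_mul, hS]
    simpa only [mul_assoc] using RCLike.re_le_re (trace_mul_mul_conjTranspose_le hX hW)
  have := norm_trace_mul_mul_conjTranspose_le hΘ (CFC.sqrt σ) (W * CFC.sqrt ρ)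
  rw [hS, hσ.trace_sqrt_mul_mul_sqrt, mul_comm] at this
  exact this.trans (by gcongr)

end Matrix

section Fidelity
variable {n : Type*} [Fintype n] [DecidableEq n]

lemma matSqrt_eq_sqrt {A : Matrix n n ℂ} (hA : A.PosSemidef) : matSqrt A = CFC.sqrt A := by
  rw [hA.sqrt_eq_cfc_sqrt, hA.1.cfc_eq, matSqrt, dif_pos hA]
  rfl

lemma rootFidelity_eq_trace_sqrt {ρ σ : Matrix n n ℂ} (hρ : ρ.PosSemidef) (hσ : σ.PosSemidef) :
    rootFidelity ρ σ =
      (CFC.sqrt ((CFC.sqrt ρ * CFC.sqrt σ)ᴴ * (CFC.sqrt ρ * CFC.sqrt σ))).trace.re := by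
  have hS (A : Matrix n n ℂ) : (CFC.sqrt A)ᴴ = CFC.sqrt A := (CFC.sqrt_nonneg A).posSemidef.1
  have hM : (CFC.sqrt ρ * CFC.sqrt σ)ᴴ * (CFC.sqrt ρ * CFC.sqrt σ) =
      CFC.sqrt σ * ρ * CFC.sqrt σ := by
    rw [conjTranspose_mul, hS, hS, mul_assoc, ← mul_assoc (CFC.sqrt ρ),
      CFC.sqrt_mul_sqrt_self ρ hρ.nonneg, ← mul_assoc]
  have hT : (CFC.sqrt σ * ρ * CFC.sqrt σ).PosSemidef := by
    simpa [hS] using hρ.conjTranspose_mul_mul_same (CFC.sqrt σ)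
  rw [rootFidelity, matSqrt_eq_sqrt hσ, matSqrt_eq_sqrt hT, hM]

theorem rootFidelity_le_of_test {ρ σ Λ : Matrix n n ℂ} (hρ : ρ.PosSemidef) (hσ : σ.PosSemidef)
    (hΛ : Λ.PosSemidef) (hΛ' : (1 - Λ).PosSemidef) :
    rootFidelity ρ σ ≤ √(Λ * ρ).trace.re * √(Λ * σ).trace.re +
      √((1 - Λ) * ρ).trace.re * √((1 - Λ) * σ).trace.re := by
  obtain ⟨W, hW, hWM⟩ := exists_contraction_mul_eq_sqrt (CFC.sqrt ρ * CFC.sqrt σ)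
  have hsplit : W * (CFC.sqrt ρ * CFC.sqrt σ) =
      W * CFC.sqrt ρ * Λ * CFC.sqrt σ + W * CFC.sqrt ρ * (1 - Λ) * CFC.sqrt σ := by
    noncomm_ring
  calc rootFidelity ρ σ = (W * (CFC.sqrt ρ * CFC.sqrt σ)).trace.re := by
        rw [rootFidelity_eq_trace_sqrt hρ hσ, hWM]
    _ ≤ ‖(W * CFC.sqrt ρ * Λ * CFC.sqrt σ).trace‖ +
        ‖(W * CFC.sqrt ρ * (1 - Λ) * CFC.sqrt σ).trace‖ := by
        rw [hsplit, trace_add]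
        exact (Complex.re_le_norm _).trans (norm_add_le _ _)
    _ ≤ _ := add_le_add (norm_trace_mul_sqrt_mul_mul_sqrt_le hρ hσ hΛ hW)
        (norm_trace_mul_sqrt_mul_mul_sqrt_le hρ hσ hΛ' hW)

lemma re_trace_one_sub_mul {ρ Λ : Matrix n n ℂ} (hρtr : ρ.trace = 1) :
    ((1 - Λ) * ρ).trace.re = 1 - (Λ * ρ).trace.re := by
  rw [sub_mul, one_mul, trace_sub, hρtr, Complex.sub_re, Complex.one_re]

theorem sq_rootFidelity_sub_sqrt_le_of_test {ρ σ Λ : Matrix n n ℂ} {ε : ℝ}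
    (hρ : ρ.PosSemidef) (hρtr : ρ.trace = 1) (hσ : σ.PosSemidef) (hσtr : σ.trace = 1)
    (hε : √ε ≤ rootFidelity ρ σ) (hΛ : Λ.PosSemidef) (hΛ' : (1 - Λ).PosSemidef)
    (hΛρ : 1 - ε ≤ (Λ * ρ).trace.re) :
    (rootFidelity ρ σ - √ε) ^ 2 ≤ (Λ * σ).trace.re := by
  have hF := rootFidelity_le_of_test hρ hσ hΛ hΛ'
  rw [re_trace_one_sub_mul hρtr, re_trace_one_sub_mul hσtr] at hF
  have hp : 0 ≤ 1 - (Λ * ρ).trace.re := by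
    rw [← re_trace_one_sub_mul hρtr]; exact (Complex.le_def.mp (hΛ'.trace_mul_nonneg hρ)).1
  have hq : 0 ≤ (Λ * σ).trace.re := (Complex.le_def.mp (hΛ.trace_mul_nonneg hσ)).1
  have hpq : √(Λ * ρ).trace.re * √(Λ * σ).trace.re ≤ √(Λ * σ).trace.re :=
    mul_le_of_le_one_left (Real.sqrt_nonneg _) (Real.sqrt_le_one.mpr (by linarith))
  have hpq' : √(1 - (Λ * ρ).trace.re) * √(1 - (Λ * σ).trace.re) ≤ √ε :=
    (mul_le_of_le_one_right (Real.sqrt_nonneg _) (Real.sqrt_le_one.mpr (by linarith))).trans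
      (Real.sqrt_le_sqrt (by linarith))
  calc (rootFidelity ρ σ - √ε) ^ 2 ≤ √(Λ * σ).trace.re ^ 2 :=
        pow_le_pow_left₀ (sub_nonneg.mpr hε) (by linarith) 2
    _ = (Λ * σ).trace.re := Real.sq_sqrt hq

lemma testValues_nonempty {ρ σ : Matrix n n ℂ} {ε : ℝ} (hρtr : ρ.trace = 1) (hε : 0 ≤ ε) :
    (testValues ρ σ ε).Nonempty :=
  ⟨_, 1, .one, by simpa using PosSemidef.zero, by simpa [hρtr], rfl⟩

lemma Dh_le_neg_logb {ρ σ : Matrix n n ℂ} {ε c : ℝ} (hc : 0 < c)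
    (hne : (testValues ρ σ ε).Nonempty) (hle : ∀ x ∈ testValues ρ σ ε, c ≤ x) :
    Dh ρ σ ε ≤ -Real.logb 2 c :=
  neg_le_neg (Real.logb_le_logb_of_le one_lt_two hc (le_csInf hne hle))

end Fidelity

theorem stmt_4_general (n : ℕ) (ρ σ : Matrix (Fin n) (Fin n) ℂ)
    (hρ : ρ.PosSemidef) (hρtr : ρ.trace = 1)
    (hσ : σ.PosSemidef) (hσtr : σ.trace = 1)
    (ε : ℝ) (hε0 : 0 ≤ ε) (hlt : Real.sqrt ε < rootFidelity ρ σ) :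
    Dh ρ σ ε ≤ -2 * Real.logb 2 (rootFidelity ρ σ - Real.sqrt ε) ∧
    ∀ Λ : Matrix (Fin n) (Fin n) ℂ, Λ.PosSemidef → (1 - Λ).PosSemidef →
      1 - ε ≤ (Λ * ρ).trace.re →
      (rootFidelity ρ σ - Real.sqrt ε) ^ 2 ≤ (Λ * σ).trace.re := by
  have hbound := fun (Λ : Matrix (Fin n) (Fin n) ℂ) hΛ hΛ' =>
    sq_rootFidelity_sub_sqrt_le_of_test hρ hρtr hσ hσtr hlt.le (Λ := Λ) hΛ hΛ'
  refine ⟨?_, hbound⟩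
  have hpos : 0 < (rootFidelity ρ σ - √ε) ^ 2 := by
    have := sub_pos.mpr hlt; positivity
  calc Dh ρ σ ε ≤ -Real.logb 2 ((rootFidelity ρ σ - √ε) ^ 2) := by
        refine Dh_le_neg_logb hpos (testValues_nonempty hρtr hε0) ?_
        rintro _ ⟨Λ, hΛ, hΛ', hΛρ, rfl⟩
        exact hbound Λ hΛ hΛ' hΛρ
    _ = -2 * Real.logb 2 (rootFidelity ρ σ - √ε) := by
        rw [Real.logb_pow]; push_cast; ring

/-- `D_h^ε(ρ‖σ) ≤ −2 log₂(√F(ρ,σ) − √ε)`, equivalently every test `Λ`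
with `Re Tr[Λρ] ≥ 1 − ε` satisfies `Re Tr[Λσ] ≥ (√F(ρ,σ) − √ε)²`. -/
theorem stmt_4 (n : ℕ) (ρ σ : Matrix (Fin n) (Fin n) ℂ)
    (hρ : ρ.PosSemidef) (hρtr : ρ.trace = 1)
    (hσ : σ.PosSemidef) (hσtr : σ.trace = 1)
    (ε : ℝ) (hε0 : 0 ≤ ε) (hε1 : ε ≤ 1) (hlt : Real.sqrt ε < rootFidelity ρ σ) :
    Dh ρ σ ε ≤ -2 * Real.logb 2 (rootFidelity ρ σ - Real.sqrt ε) ∧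
    ∀ Λ : Matrix (Fin n) (Fin n) ℂ, Λ.PosSemidef → (1 - Λ).PosSemidef →
      1 - ε ≤ (Λ * ρ).trace.re →
      (rootFidelity ρ σ - Real.sqrt ε) ^ 2 ≤ (Λ * σ).trace.re :=
  stmt_4_general n ρ σ hρ hρtr hσ hσtr ε hε0 hlt
end

section
/- Let ρ and σ be density matrices on Fin n and let Λ be a test. Then Re Tr[Λ · (ρ − σ)] ≤ ½‖ρ − σ‖₁. -/
open Matrix Kronecker
open scoped ComplexOrder

/-!
Diagonalise `A = U D Uᴴ`. For a test `Λ`, `M = Uᴴ Λ U` is again a test, so its diagonal entries lie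
in `[0, 1]`, and `Re Tr[Λ A] = ∑ᵢ Re Mᵢᵢ λᵢ ≤ ∑ᵢ max λᵢ 0 = (∑ᵢ |λᵢ| + ∑ᵢ λᵢ) / 2`.
Identifying `traceNorm` with the trace of the continuous functional calculus `|A|`, the first sum
is `‖A‖₁`; for `A = ρ - σ` the second sum is `Tr ρ - Tr σ = 0`.
-/

open scoped MatrixOrder

lemma mul_le_half_abs_add {c x : ℝ} (h0 : 0 ≤ c) (h1 : c ≤ 1) : c * x ≤ (|x| + x) / 2 := by
  rcases le_or_gt 0 x with hx | hx
  · rw [abs_of_nonneg hx]; nlinarith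
  · rw [abs_of_neg hx]; nlinarith

namespace Matrix

lemma PosSemidef.re_diag_nonneg {n : Type*} {M : Matrix n n ℂ} (hM : M.PosSemidef) (i : n) :
    0 ≤ (M i i).re :=
  (Complex.nonneg_iff.1 hM.diag_nonneg).1

variable {n : Type*} [Fintype n] [DecidableEq n]

lemma matSqrt_eq_cfcSqrt {A : Matrix n n ℂ} (hA : A.PosSemidef) : matSqrt A = CFC.sqrt A := by
  rw [matSqrt, dif_pos hA, CFC.sqrt_eq_cfc, cfc_nnreal_eq_real _ A hA.nonneg, hA.1.cfc_eq,
    IsHermitian.cfc, Unitary.conjStarAlgAut_apply]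
  congr 3
  funext i
  simp [hA.eigenvalues_nonneg i]

lemma traceNorm_eq_re_trace_abs (A : Matrix n n ℂ) : traceNorm A = (CFC.abs A).trace.re := by
  rw [traceNorm, matSqrt_eq_cfcSqrt (posSemidef_conjTranspose_mul_self A), CFC.abs]
  rfl

lemma IsHermitian.trace_cfc {A : Matrix n n ℂ} (hA : A.IsHermitian) (f : ℝ → ℝ) :
    (cfc f A).trace = ∑ i, (f (hA.eigenvalues i) : ℂ) := by
  rw [hA.cfc_eq, IsHermitian.cfc, Unitary.conjStarAlgAut_apply, trace_mul_cycle,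
    Unitary.coe_star_mul_self, Matrix.one_mul, trace_diagonal]
  rfl

lemma IsHermitian.traceNorm_eq_sum_abs_eigenvalues {A : Matrix n n ℂ} (hA : A.IsHermitian) :
    traceNorm A = ∑ i, |hA.eigenvalues i| := by
  rw [traceNorm_eq_re_trace_abs, CFC.abs_eq_cfc_norm A hA.isSelfAdjoint, hA.trace_cfc,
    ← Complex.ofReal_sum, Complex.ofReal_re]
  rfl

lemma IsHermitian.trace_mul_eq_sum {A : Matrix n n ℂ} (hA : A.IsHermitian) (Λ : Matrix n n ℂ) :
    (Λ * A).trace = ∑ i, (star (hA.eigenvectorUnitary : Matrix n n ℂ) * Λ *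
      hA.eigenvectorUnitary) i i * hA.eigenvalues i := by
  set U : Matrix n n ℂ := (hA.eigenvectorUnitary : Matrix n n ℂ)
  calc (Λ * A).trace = (Λ * (U * diagonal (RCLike.ofReal ∘ hA.eigenvalues) * star U)).trace := by
        conv_lhs => rw [hA.spectral_theorem, Unitary.conjStarAlgAut_apply]
    _ = (star U * Λ * U * diagonal (RCLike.ofReal ∘ hA.eigenvalues)).trace := by
        rw [← Matrix.mul_assoc, trace_mul_cycle]
        simp only [Matrix.mul_assoc]
    _ = _ := by simp [trace, mul_diagonal]

lemma one_sub_star_mul_mul_of_mem_unitary {Λ U : Matrix n n ℂ} (hU : U ∈ unitary (Matrix n n ℂ)) :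
    1 - star U * Λ * U = star U * (1 - Λ) * U := by
  rw [Matrix.mul_sub, Matrix.sub_mul, Matrix.mul_one, Unitary.star_mul_self_of_mem hU]

lemma IsHermitian.re_trace_mul_le {A Λ : Matrix n n ℂ} (hA : A.IsHermitian)
    (hΛ : Λ.PosSemidef) (hΛ' : (1 - Λ).PosSemidef) :
    (Λ * A).trace.re ≤ (traceNorm A + A.trace.re) / 2 := by
  set U : Matrix n n ℂ := (hA.eigenvectorUnitary : Matrix n n ℂ)
  set M := star U * Λ * U
  have hM : M.PosSemidef := hΛ.conjTranspose_mul_mul_same U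
  have hM' : (1 - M).PosSemidef := by
    rw [one_sub_star_mul_mul_of_mem_unitary hA.eigenvectorUnitary.2]
    exact hΛ'.conjTranspose_mul_mul_same U
  have hM_le_one (i : n) : (M i i).re ≤ 1 := by
    simpa using hM'.re_diag_nonneg i
  calc (Λ * A).trace.re = ∑ i, (M i i).re * hA.eigenvalues i := by
        simp [hA.trace_mul_eq_sum, Complex.re_sum, M, U]
    _ ≤ ∑ i, (|hA.eigenvalues i| + hA.eigenvalues i) / 2 :=
        Finset.sum_le_sum fun i _ => mul_le_half_abs_add (hM.re_diag_nonneg i) (hM_le_one i)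
    _ = (traceNorm A + A.trace.re) / 2 := by
        rw [hA.traceNorm_eq_sum_abs_eigenvalues, hA.trace_eq_sum_eigenvalues, ← Finset.sum_div,
          Finset.sum_add_distrib, Complex.re_sum]
        rfl

end Matrix

/-- for any test `Λ` and density matrices `ρ, σ`,
`Re Tr[Λ(ρ − σ)] ≤ ½‖ρ − σ‖₁`. -/
theorem stmt_8 (n : ℕ) (ρ σ : Matrix (Fin n) (Fin n) ℂ)
    (hρ : ρ.PosSemidef) (hρtr : ρ.trace = 1)
    (hσ : σ.PosSemidef) (hσtr : σ.trace = 1)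
    (Λ : Matrix (Fin n) (Fin n) ℂ) (hΛ : Λ.PosSemidef) (hΛ' : (1 - Λ).PosSemidef) :
    (Λ * (ρ - σ)).trace.re ≤ traceNorm (ρ - σ) / 2 := by
  have htr : (ρ - σ).trace = 0 := by rw [trace_sub, hρtr, hσtr, sub_self]
  simpa [htr] using (hρ.1.sub hσ.1).re_trace_mul_le hΛ hΛ'
end

section
/- Let N : Matrix n n ℂ →ₗ[ℂ] Matrix m m ℂ be a positive linear map, i.e. N maps every positive semidefinite matrix to a positive semidefinite matrix. Let ρ and σ' be density matrices on Fin n, let σ be a density matrix on Fin m, and let a, b ∈ ℝ. If 2^a • σ' − ρ is positive semidefinite and 2^b • σ − N(σ') is positive semidefinite, then 2^(a+b) • σ − N(ρ) is positive semidefinite. (This is the data-processed triangle inequality D_max(N(ρ)‖σ) ≤ D_max(ρ‖σ') + D_max(N(σ')‖σ) for the max-relative entropy, stated in Loewner-order form.) -/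
open Matrix Kronecker
open scoped ComplexOrder

theorem Matrix.PosSemidef.smul_sub_map_of_smul_sub {ι κ : Type*} [Fintype ι] [Fintype κ]
    (N : Matrix ι ι ℂ →ₗ[ℂ] Matrix κ κ ℂ)
    (hN : ∀ A : Matrix ι ι ℂ, A.PosSemidef → (N A).PosSemidef)
    {ρ X : Matrix ι ι ℂ} {σ : Matrix κ κ ℂ} {s t : ℝ} (hs : 0 ≤ s)
    (hρX : (s • X - ρ).PosSemidef) (hXσ : (t • σ - N X).PosSemidef) :
    ((s * t) • σ - N ρ).PosSemidef := by
  -- `(s * t) • σ - N ρ = N (s • X - ρ) + s • (t • σ - N X)`, a sum of two PSD matrices.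
  have hsum := (hN _ hρX).add (hXσ.smul hs)
  convert hsum using 1
  rw [map_sub, N.map_smul_of_tower, smul_sub, mul_smul]
  abel

theorem stmt_10_general (n m : ℕ)
    (N : Matrix (Fin n) (Fin n) ℂ →ₗ[ℂ] Matrix (Fin m) (Fin m) ℂ)
    (hN : ∀ A : Matrix (Fin n) (Fin n) ℂ, A.PosSemidef → (N A).PosSemidef)
    (ρ σ' : Matrix (Fin n) (Fin n) ℂ)
    (σ : Matrix (Fin m) (Fin m) ℂ)
    (a b : ℝ)
    (h1 : ((2 : ℝ) ^ a • σ' - ρ).PosSemidef)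
    (h2 : ((2 : ℝ) ^ b • σ - N σ').PosSemidef) :
    ((2 : ℝ) ^ (a + b) • σ - N ρ).PosSemidef := by
  rw [Real.rpow_add two_pos]
  exact h1.smul_sub_map_of_smul_sub N hN (by positivity) h2

/-- the data-processed triangle inequality
`D_max(N(ρ)‖σ) ≤ D_max(ρ‖σ') + D_max(N(σ')‖σ)` in Loewner-order form. -/
theorem stmt_10 (n m : ℕ)
    (N : Matrix (Fin n) (Fin n) ℂ →ₗ[ℂ] Matrix (Fin m) (Fin m) ℂ)
    (hN : ∀ A : Matrix (Fin n) (Fin n) ℂ, A.PosSemidef → (N A).PosSemidef)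
    (ρ σ' : Matrix (Fin n) (Fin n) ℂ)
    (hρ : ρ.PosSemidef) (hρtr : ρ.trace = 1)
    (hσ' : σ'.PosSemidef) (hσ'tr : σ'.trace = 1)
    (σ : Matrix (Fin m) (Fin m) ℂ) (hσ : σ.PosSemidef) (hσtr : σ.trace = 1)
    (a b : ℝ)
    (h1 : ((2 : ℝ) ^ a • σ' - ρ).PosSemidef)
    (h2 : ((2 : ℝ) ^ b • σ - N σ').PosSemidef) :
    ((2 : ℝ) ^ (a + b) • σ - N ρ).PosSemidef :=
  stmt_10_general n m N hN ρ σ' σ a b h1 h2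
end
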